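/- An infinite simple group is not isomorphic to any finitely generated linear group over a field. -/

import Mathlib

/-!
A finitely generated subgroup of `GL_n(k)` lives in `GL_n(A)` for the subring `A` generated by
the entries of its generators and of their inverses. Since `ℤ` is a Jacobson ring, so is `A`, its
maximal ideals intersect in the nilradical `0`, and its residue fields are finite. Reducing
modulo them separates every `g ≠ 1` from `1` in a finite group `GL_n(A/m)` (Mal'cev). A simple
group has no proper nontrivial normal subgroups, so a residually finite simple group is finite.
-/

theorem Group.ResiduallyFinite.of_injective {G G' : Type*} [Group G] [Group G']
    [ResiduallyFinite G'] (f : G →* G') (hf : Function.Injective f) : ResiduallyFinite G :=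
  residuallyFinite_iff_forall_finiteIndexNormalSubgroup.mpr fun g hg =>
    hf <| (eq_one_iff_forall_finiteIndexNormalSubroup (f g) fun K => hg (K.comap f)).trans
      f.map_one.symm

theorem IsSimpleGroup.finite_of_residuallyFinite (G : Type*) [Group G] [IsSimpleGroup G]
    [Group.ResiduallyFinite G] : Finite G := by
  obtain ⟨g, hg⟩ := exists_ne (1 : G)
  obtain ⟨N, hgN⟩ := Group.exists_finiteIndexNormalSubgroup_notMem g hg
  rcases eq_bot_or_eq_top_of_normal N.toSubgroup N.isNormal' with hbot | htop
  · have hindex := N.isFiniteIndex'.index_ne_zero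
    rw [hbot, Subgroup.index_bot] at hindex
    exact Nat.finite_of_card_ne_zero hindex
  · exact absurd (show g ∈ N.toSubgroup from htop ▸ Subgroup.mem_top g) hgN

instance Int.isJacobsonRing : IsJacobsonRing ℤ := by
  refine isJacobsonRing_iff_prime_eq.mpr fun P hP => ?_
  by_cases hbot : P = ⊥
  · subst hbot
    refine le_antisymm (fun x hx => ?_) Ideal.le_jacobson
    have hunit := Int.isUnit_iff.mp (Ideal.mem_jacobson_bot.mp hx x)
    have hx0 : x = 0 := by rcases hunit with h | h <;> nlinarith [sq_nonneg x]
    simp [hx0]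
  · have := IsPrime.to_maximal_ideal hbot
    exact Ideal.jacobson_eq_self_of_isMaximal

theorem finite_of_finiteType_int (F : Type*) [Field F] [Algebra.FiniteType ℤ F] : Finite F := by
  have := finite_of_finite_type_of_isJacobsonRing ℤ F
  obtain ⟨p, hchar⟩ := CharP.exists F
  rcases CharP.char_is_prime_or_zero F p with hp | rfl
  · refine Module.finite_of_fg_torsion F fun {x} =>
      ⟨⟨p, mem_nonZeroDivisors_of_ne_zero (by exact_mod_cast hp.ne_zero)⟩, ?_⟩
    simp [Submonoid.smul_def]
  · -- `F` would be integral over `ℤ ⊆ F`, making `ℤ` a field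
    have := CharP.charP_to_charZero F
    exact (Int.not_isField
      (isField_of_isIntegral_of_isField Int.cast_injective (Field.toIsField F))).elim

theorem exists_finite_quotient_notMem {A : Type*} [CommRing A] [IsReduced A]
    [Algebra.FiniteType ℤ A] {x : A} (hx : x ≠ 0) :
    ∃ m : Ideal A, Finite (A ⧸ m) ∧ x ∉ m := by
  have : IsJacobsonRing A := isJacobsonRing_of_finiteType (A := ℤ)
  have hxJ : x ∉ (⊥ : Ideal A).jacobson := by
    rwa [← Ideal.radical_eq_jacobson, Ideal.radical_bot_of_isReduced, Ideal.mem_bot]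
  obtain ⟨m, ⟨-, hm⟩, hxm⟩ : ∃ m ∈ {J : Ideal A | ⊥ ≤ J ∧ J.IsMaximal}, x ∉ m := by
    simpa [Ideal.jacobson, Ideal.mem_sInf] using hxJ
  let := Ideal.Quotient.field m
  have := Algebra.FiniteType.of_surjective (Ideal.Quotient.mk m).toIntAlgHom
    Ideal.Quotient.mk_surjective
  exact ⟨m, finite_of_finiteType_int _, hxm⟩

namespace Matrix.GeneralLinearGroup

variable {n : Type*} [Fintype n] [DecidableEq n]

theorem residuallyFinite_of_finiteType (A : Type*) [CommRing A] [IsReduced A]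
    [Algebra.FiniteType ℤ A] : Group.ResiduallyFinite (GL n A) := by
  refine Group.residuallyFinite_of_forall_exists_finite_monoidHom fun g hg => ?_
  obtain ⟨i, j, hij⟩ : ∃ i j, g i j - (1 : Matrix n n A) i j ≠ 0 := by
    by_contra! h
    exact hg (Units.ext (Matrix.ext fun i j => sub_eq_zero.mp (h i j)))
  obtain ⟨m, _, hxm⟩ := exists_finite_quotient_notMem hij
  refine ⟨GL n (A ⧸ m), inferInstance, inferInstance, map (Ideal.Quotient.mk m),
    fun h => hxm ?_⟩
  rw [← Ideal.Quotient.eq, ← GeneralLinearGroup.map_apply, h]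
  by_cases hij : i = j <;> simp [Matrix.one_apply, hij]

theorem map_injective {R S : Type*} [CommRing R] [CommRing S] {f : R →+* S}
    (hf : Function.Injective f) : Function.Injective (map (n := n) f) := fun g g' h =>
  Units.ext <| Matrix.ext fun i j => hf <| by
    rw [← GeneralLinearGroup.map_apply, ← GeneralLinearGroup.map_apply, h]

theorem mem_range_map_algebraMap {R k : Type*} [CommRing R] [CommRing k] [Algebra R k]
    {A : Subalgebra R k} {g : GL n k} (hg : ∀ i j, g i j ∈ A) (hginv : ∀ i j, g⁻¹ i j ∈ A) :
    g ∈ (map (algebraMap A k)).range := by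
  let M : Matrix n n A := fun i j => ⟨g i j, hg i j⟩
  let N : Matrix n n A := fun i j => ⟨g⁻¹ i j, hginv i j⟩
  have hinj :
      Function.Injective ((algebraMap A k).mapMatrix : Matrix n n A →+* Matrix n n k) :=
    Matrix.map_injective Subtype.val_injective
  have hM : (algebraMap A k).mapMatrix M = g := rfl
  have hN : (algebraMap A k).mapMatrix N = ↑g⁻¹ := rfl
  refine ⟨⟨M, N, hinj ?_, hinj ?_⟩, Units.ext hM⟩
  · rw [map_mul, map_one, hM, hN, Units.mul_inv]
  · rw [map_mul, map_one, hM, hN, Units.inv_mul]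

theorem exists_finiteType_le_range_map {k : Type*} [CommRing k] (H : Subgroup (GL n k))
    (hH : H.FG) : ∃ A : Subalgebra ℤ k, Algebra.FiniteType ℤ A ∧
      H ≤ (map (algebraMap A k)).range := by
  obtain ⟨S, rfl, hSfin⟩ := (Subgroup.fg_iff H).mp hH
  let E : Set k := ⋃ g ∈ S, Set.range (fun p : n × n => g p.1 p.2) ∪
    Set.range (fun p : n × n => g⁻¹ p.1 p.2)
  have hEfin : E.Finite :=
    hSfin.biUnion fun g _ => (Set.finite_range _).union (Set.finite_range _)
  refine ⟨Algebra.adjoin ℤ E, .adjoin_of_finite hEfin,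
    (Subgroup.closure_le _).mpr fun g hg => ?_⟩
  exact mem_range_map_algebraMap
    (fun i j => Algebra.subset_adjoin (Set.mem_biUnion hg (Or.inl ⟨(i, j), rfl⟩)))
    (fun i j => Algebra.subset_adjoin (Set.mem_biUnion hg (Or.inr ⟨(i, j), rfl⟩)))

theorem residuallyFinite_of_fg {k : Type*} [CommRing k] [IsReduced k] (H : Subgroup (GL n k))
    (hH : Group.FG H) : Group.ResiduallyFinite H := by
  obtain ⟨A, _, hle⟩ := exists_finiteType_le_range_map H ((Group.fg_iff_subgroup_fg H).mp hH)
  have : IsReduced A := isReduced_of_injective (algebraMap A k) Subtype.val_injective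
  have := residuallyFinite_of_finiteType (n := n) A
  have hinj := map_injective (n := n) (f := algebraMap A k) Subtype.val_injective
  exact .of_injective ((MonoidHom.ofInjective hinj).symm.toMonoidHom.comp (Subgroup.inclusion hle))
    ((MonoidHom.ofInjective hinj).symm.injective.comp (Subgroup.inclusion_injective hle))

end Matrix.GeneralLinearGroup

/-- An infinite simple group is not isomorphic to any finitely generated linear group
over a field. -/
theorem infinite_simple_not_fg_linear (G : Type*) [Group G] [Infinite G]
    (hG : IsSimpleGroup G) (k : Type) [Field k] (n : ℕ)
    (H : Subgroup (GL (Fin n) k)) (hH : Group.FG H) : ¬ Nonempty (G ≃* H) := by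
  rintro ⟨e⟩
  have := Matrix.GeneralLinearGroup.residuallyFinite_of_fg H hH
  have : Group.ResiduallyFinite G := .of_injective e.toMonoidHom e.injective
  have := IsSimpleGroup.finite_of_residuallyFinite G
  exact not_finite G
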